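/- Let x ∈ ℝ^K be deterministic, w ~ N(0, σ²I_K), y = x + w, and f : ℝ^K → ℝ^K a C¹ function satisfying the Stein identity E[⟨w, f(y)⟩] = σ² E[div f(y)]. Define ε = (1/K)[‖y‖² − Kσ² + ‖f(y)‖² − 2⟨y, f(y)⟩ + 2σ² div f(y)]. Then E[ε] = (1/K) E[‖x − f(y)‖²], i.e., ε is an unbiased estimator of the mean-square error. -/

import Mathlib

/-!
Write `y = x + w`. Expanding the squares,
`Kε - ‖x - f(y)‖² = 2⟨x, w⟩ + (‖w‖² - Kσ²) - 2(⟨w, f(y)⟩ - σ² div f(y))`.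
The first term has mean zero because the noise is centred, the second because each coordinate has
second moment `σ²`, and the third by the Stein identity; beyond these moments, Gaussianity plays
no role.
-/

open MeasureTheory ProbabilityTheory

lemma integral_sq_gaussianReal_zero_mean (v : NNReal) : ∫ t, t ^ 2 ∂gaussianReal 0 v = v := by
  rw [← variance_of_integral_eq_zero aemeasurable_id' integral_id_gaussianReal,
    variance_fun_id_gaussianReal]

section GaussianNoise

variable {ι : Type*} [Fintype ι] (v : NNReal) (k : ι)

lemma integrable_sq_eval_pi_gaussianReal :
    Integrable (fun w : ι → ℝ => w k ^ 2) (Measure.pi fun _ => gaussianReal 0 v) :=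
  integrable_comp_eval (X := fun _ => ℝ) (f := fun t => t ^ 2)
    (memLp_id_gaussianReal 2).integrable_sq

lemma integral_sq_eval_pi_gaussianReal :
    ∫ w : ι → ℝ, w k ^ 2 ∂(Measure.pi fun _ => gaussianReal 0 v) = v := by
  rw [integral_comp_eval (X := fun _ => ℝ) (f := fun t => t ^ 2) (by fun_prop),
    integral_sq_gaussianReal_zero_mean]

lemma integrable_eval_pi_gaussianReal :
    Integrable (fun w : ι → ℝ => w k) (Measure.pi fun _ => gaussianReal 0 v) :=
  integrable_eval ((memLp_id_gaussianReal 1).integrable le_rfl)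

lemma integral_eval_pi_gaussianReal :
    ∫ w : ι → ℝ, w k ∂(Measure.pi fun _ => gaussianReal 0 v) = 0 :=
  integral_eval.trans integral_id_gaussianReal

end GaussianNoise

section IsotropicNoise

variable {ι : Type*} [Fintype ι]

lemma sure_integrand_eq_sq_error_add (x w F : ι → ℝ) (c s D : ℝ) :
    (∑ k, (x k + w k) ^ 2) - c * s + (∑ k, F k ^ 2) - 2 * (∑ k, (x k + w k) * F k) + 2 * s * D
      = (∑ k, (x k - F k) ^ 2) + 2 * (∑ k, x k * w k) + ((∑ k, w k ^ 2) - c * s)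
        - 2 * ((∑ k, w k * F k) - s * D) := by
  simp only [add_sq, sub_sq, add_mul, mul_assoc, Finset.sum_add_distrib, Finset.sum_sub_distrib,
    ← Finset.mul_sum]
  ring

variable {μ : Measure (ι → ℝ)}

lemma integrable_sum_mul_of_integrable_sum_sq (x : ι → ℝ) (F : (ι → ℝ) → ι → ℝ)
    [IsFiniteMeasure μ] (hF : Integrable (fun w => ∑ k, F w k ^ 2) μ)
    (hxF : Integrable (fun w => ∑ k, (x k - F w k) ^ 2) μ) :
    Integrable (fun w => ∑ k, x k * F w k) μ := by
  have polarization : (fun w => ∑ k, x k * F w k)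
      = fun w => ((∑ k, x k ^ 2) + (∑ k, F w k ^ 2) - ∑ k, (x k - F w k) ^ 2) / 2 := by
    funext w
    simp only [sub_sq, Finset.sum_add_distrib, Finset.sum_sub_distrib, mul_assoc, ← Finset.mul_sum]
    ring
  rw [polarization]
  exact (((integrable_const _).add hF).sub hxF).div_const 2

theorem integral_sure_eq_integral_sq_error [IsProbabilityMeasure μ] {s : ℝ} (x : ι → ℝ)
    (F : (ι → ℝ) → ι → ℝ) (D : (ι → ℝ) → ℝ)
    (hw : ∀ k, Integrable (fun w => w k) μ) (hmean : ∀ k, ∫ w, w k ∂μ = 0)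
    (hw2 : ∀ k, Integrable (fun w => w k ^ 2) μ) (hvar : ∀ k, ∫ w, w k ^ 2 ∂μ = s)
    (hstein : ∫ w, (∑ k, w k * F w k) ∂μ = s * ∫ w, D w ∂μ)
    (hF : Integrable (fun w => ∑ k, F w k ^ 2) μ)
    (hyF : Integrable (fun w => ∑ k, (x k + w k) * F w k) μ)
    (hD : Integrable D μ)
    (hxF : Integrable (fun w => ∑ k, (x k - F w k) ^ 2) μ) :
    ∫ w, ((∑ k, (x k + w k) ^ 2) - Fintype.card ι * s + (∑ k, F w k ^ 2)
        - 2 * (∑ k, (x k + w k) * F w k) + 2 * s * D w) ∂μ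
      = ∫ w, (∑ k, (x k - F w k) ^ 2) ∂μ := by
  have hxw : Integrable (fun w => ∑ k, x k * w k) μ :=
    integrable_finsetSum _ fun k _ => (hw k).const_mul (x k)
  have hxw_zero : ∫ w, (∑ k, x k * w k) ∂μ = 0 := by
    simp [integral_finsetSum _ fun k _ => (hw k).const_mul (x k), integral_const_mul, hmean]
  have hnoise : Integrable (fun w => (∑ k, w k ^ 2) - Fintype.card ι * s) μ :=
    (integrable_finsetSum _ fun k _ => hw2 k).sub (integrable_const _)
  have hnoise_zero : ∫ w, ((∑ k, w k ^ 2) - Fintype.card ι * s) ∂μ = 0 := by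
    rw [integral_sub (integrable_finsetSum _ fun k _ => hw2 k) (integrable_const _),
      integral_finsetSum _ fun k _ => hw2 k]
    simp [hvar]
  have hwF : Integrable (fun w => ∑ k, w k * F w k) μ := by
    refine (hyF.sub (integrable_sum_mul_of_integrable_sum_sq x F hF hxF)).congr
      (.of_forall fun w => ?_)
    simp only [Pi.sub_apply, ← Finset.sum_sub_distrib, add_mul, add_sub_cancel_left]
  have hstein_gap : Integrable (fun w => (∑ k, w k * F w k) - s * D w) μ :=
    hwF.sub (hD.const_mul s)
  have hstein_zero : ∫ w, ((∑ k, w k * F w k) - s * D w) ∂μ = 0 := by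
    rw [integral_sub hwF (hD.const_mul s), integral_const_mul, hstein, sub_self]
  have herr_xw := hxF.fun_add (hxw.const_mul 2)
  simp only [sure_integrand_eq_sq_error_add]
  rw [integral_sub (herr_xw.fun_add hnoise) (hstein_gap.const_mul 2),
    integral_add herr_xw hnoise, integral_add hxF (hxw.const_mul 2), integral_const_mul,
    integral_const_mul, hxw_zero, hnoise_zero, hstein_zero]
  ring

end IsotropicNoise

theorem sure_unbiased_general (K : ℕ) (σ : NNReal) (x : Fin K → ℝ)
    (f : (Fin K → ℝ) → (Fin K → ℝ))
    (μ : Measure (Fin K → ℝ))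
    (hμ : μ = Measure.pi fun _ : Fin K => gaussianReal 0 (σ ^ 2))
    (divf : (Fin K → ℝ) → ℝ)
    (hstein : ∫ w, (∑ k, w k * f (x + w) k) ∂μ
        = (σ : ℝ) ^ 2 * ∫ w, divf (x + w) ∂μ)
    (hint₂ : Integrable (fun w => ∑ k, (f (x + w) k) ^ 2) μ)
    (hint₃ : Integrable (fun w => ∑ k, (x k + w k) * f (x + w) k) μ)
    (hint₄ : Integrable (fun w => divf (x + w)) μ)
    (hint₅ : Integrable (fun w => ∑ k, (x k - f (x + w) k) ^ 2) μ) :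
    ∫ w, ((1 : ℝ) / K) * ((∑ k, (x k + w k) ^ 2) - K * (σ : ℝ) ^ 2
        + (∑ k, (f (x + w) k) ^ 2) - 2 * (∑ k, (x k + w k) * f (x + w) k)
        + 2 * (σ : ℝ) ^ 2 * divf (x + w)) ∂μ
      = ((1 : ℝ) / K) * ∫ w, (∑ k, (x k - f (x + w) k) ^ 2) ∂μ := by
  subst hμ
  have h := integral_sure_eq_integral_sq_error x (fun w => f (x + w)) (fun w => divf (x + w))
    (integrable_eval_pi_gaussianReal _) (integral_eval_pi_gaussianReal _)
    (integrable_sq_eval_pi_gaussianReal _)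
    (fun k => (integral_sq_eval_pi_gaussianReal _ k).trans (NNReal.coe_pow σ 2))
    hstein hint₂ hint₃ hint₄ hint₅
  rw [Fintype.card_fin] at h
  rw [integral_const_mul, h]

/-- SURE is an unbiased estimator of the MSE: if `x` is deterministic,
`w ~ N(0, σ²I_K)`, `y = x + w`, and the C¹ denoiser `f` satisfies the Stein identity,
then `ε = (1/K)[‖y‖² − Kσ² + ‖f(y)‖² − 2⟨y, f(y)⟩ + 2σ² div f(y)]` satisfies
`E[ε] = (1/K) E[‖x − f(y)‖²]`. -/
theorem sure_unbiased (K : ℕ) (hK : 0 < K) (σ : NNReal) (x : Fin K → ℝ)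
    (f : (Fin K → ℝ) → (Fin K → ℝ)) (hf : ContDiff ℝ 1 f)
    (μ : Measure (Fin K → ℝ))
    (hμ : μ = Measure.pi fun _ : Fin K => gaussianReal 0 (σ ^ 2))
    (divf : (Fin K → ℝ) → ℝ)
    (hdiv : ∀ y, divf y = ∑ k, fderiv ℝ f y (Pi.single k 1) k)
    (hstein : ∫ w, (∑ k, w k * f (x + w) k) ∂μ
        = (σ : ℝ) ^ 2 * ∫ w, divf (x + w) ∂μ)
    (hint₁ : Integrable (fun w => ∑ k, (x k + w k) ^ 2) μ)
    (hint₂ : Integrable (fun w => ∑ k, (f (x + w) k) ^ 2) μ)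
    (hint₃ : Integrable (fun w => ∑ k, (x k + w k) * f (x + w) k) μ)
    (hint₄ : Integrable (fun w => divf (x + w)) μ)
    (hint₅ : Integrable (fun w => ∑ k, (x k - f (x + w) k) ^ 2) μ) :
    ∫ w, ((1 : ℝ) / K) * ((∑ k, (x k + w k) ^ 2) - K * (σ : ℝ) ^ 2
        + (∑ k, (f (x + w) k) ^ 2) - 2 * (∑ k, (x k + w k) * f (x + w) k)
        + 2 * (σ : ℝ) ^ 2 * divf (x + w)) ∂μ
      = ((1 : ℝ) / K) * ∫ w, (∑ k, (x k - f (x + w) k) ^ 2) ∂μ :=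
  sure_unbiased_general K σ x f μ hμ divf hstein hint₂ hint₃ hint₄ hint₅
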